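/- arXiv:1812.00368 — 3 statements merged into one kernel-verified Lean document; each statement's English description precedes it below -/
import Mathlib

section
/- Let W be a weighing matrix W(n,m) and let G = [W|I_n] be the n×2n block matrix over F_q obtained by reducing entries modulo p. If m + 1 ≠ 0 in F_q, then G generates an LCD code C of length 2n and dimension n over F_q. -/
/-!
Over `F`, the rows of `G = [W | I]` satisfy `G Gᵀ = W Wᵀ + I = (m + 1) I`, an invertible Gram
matrix. Whenever the Gram matrix `G Gᵀ` is invertible, the rows of `G` are independent (so the
code has dimension the number of rows), and a codeword `x G` orthogonal to every row of `G` has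
`x (G Gᵀ) = 0`, hence `x = 0`: the code meets its dual trivially.
-/

open Matrix BigOperators

/-- The row span of a matrix `G`: the linear code generated by the rows of `G`. -/
def rowSpan (F : Type*) [Field F] {k ι : Type*} (G : Matrix k ι F) : Submodule F (ι → F) :=
  Submodule.span F (Set.range fun i => G i)

/-- The dual of a linear code under the standard dot product. -/
def dualCode {F : Type*} [Field F] {ι : Type*} [Fintype ι] (C : Submodule F (ι → F)) :
    Submodule F (ι → F) where
  carrier := {v | ∀ c ∈ C, v ⬝ᵥ c = 0}
  add_mem' := by
    intro a b ha hb c hc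
    rw [add_dotProduct, ha c hc, hb c hc, add_zero]
  zero_mem' := by
    intro c hc
    rw [zero_dotProduct]
  smul_mem' := by
    intro r a ha c hc
    rw [smul_dotProduct, ha c hc, smul_zero]

/-- A linear code is LCD (linear complementary dual) if it meets its dual trivially. -/
def IsLCD {F : Type*} [Field F] {ι : Type*} [Fintype ι] (C : Submodule F (ι → F)) : Prop :=
  C ⊓ dualCode C = ⊥

section GramMatrix

variable {F : Type*} [Field F] {k ι : Type*} [Fintype k]

theorem rowSpan_eq_range_vecMulLinear (G : Matrix k ι F) :
    rowSpan F G = LinearMap.range G.vecMulLinear :=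
  (range_vecMulLinear G).symm

theorem vecMul_dotProduct_row [Fintype ι] (G : Matrix k ι F) (x : k → F) (j : k) :
    (x ᵥ* G) ⬝ᵥ G j = (x ᵥ* (G * Gᵀ)) j := by
  rw [← vecMul_vecMul]
  rfl

theorem eq_zero_of_vecMul_orthogonal_rows [Fintype ι] [DecidableEq k] {G : Matrix k ι F}
    (hG : IsUnit (G * Gᵀ)) {x : k → F} (hx : ∀ j, (x ᵥ* G) ⬝ᵥ G j = 0) : x = 0 := by
  refine vecMul_injective_iff_isUnit.mpr hG (funext fun j => ?_)
  beta_reduce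
  rw [zero_vecMul, Pi.zero_apply, ← vecMul_dotProduct_row, hx]

theorem isLCD_rowSpan_of_isUnit_mul_transpose [Fintype ι] [DecidableEq k] {G : Matrix k ι F}
    (hG : IsUnit (G * Gᵀ)) :
    IsLCD (rowSpan F G) := by
  rw [IsLCD, Submodule.eq_bot_iff]
  rintro v ⟨hv_code, hv_dual⟩
  obtain ⟨x, rfl⟩ : ∃ x, x ᵥ* G = v := by
    simpa [rowSpan_eq_range_vecMulLinear] using hv_code
  have hx : x = 0 := eq_zero_of_vecMul_orthogonal_rows hG fun j =>
    hv_dual (G j) (Submodule.subset_span ⟨j, rfl⟩)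
  rw [hx, zero_vecMul]

theorem finrank_rowSpan_of_isUnit_mul_transpose [Fintype ι] [DecidableEq k] {G : Matrix k ι F}
    (hG : IsUnit (G * Gᵀ)) :
    Module.finrank F (rowSpan F G) = Fintype.card k := by
  rw [rowSpan, ← row_def, ← rank_eq_finrank_span_row]
  refine le_antisymm G.rank_le_card_height ?_
  calc Fintype.card k = (G * Gᵀ).rank := (rank_of_isUnit _ hG).symm
    _ ≤ G.rank := rank_mul_le_left G Gᵀ

end GramMatrix

theorem fromCols_mul_transpose_fromCols {R : Type*} [CommSemiring R] {k ι κ : Type*}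
    [Fintype ι] [Fintype κ] (A : Matrix k ι R) (B : Matrix k κ R) :
    fromCols A B * (fromCols A B)ᵀ = A * Aᵀ + B * Bᵀ := by
  rw [transpose_fromCols, fromCols_mul_fromRows]

theorem map_intCast_mul_transpose_eq_smul_one {R : Type*} [Ring R] {n : Type*} [Fintype n]
    [DecidableEq n] {m : ℕ} {W : Matrix n n ℤ} (hW : W * Wᵀ = (m : ℤ) • (1 : Matrix n n ℤ)) :
    W.map (Int.cast : ℤ → R) * (W.map (Int.cast : ℤ → R))ᵀ = (m : R) • (1 : Matrix n n R) := by
  change W.map (Int.castRingHom R) * (W.map (Int.castRingHom R))ᵀ = _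
  rw [← transpose_map, ← Matrix.map_mul, hW]
  ext i j
  rw [map_apply, Matrix.smul_apply, Matrix.smul_apply, one_apply, one_apply]
  split_ifs <;> simp

theorem statement4_general {F : Type*} [Field F] {n m : ℕ}
    (W : Matrix (Fin n) (Fin n) ℤ)
    (hW : W * Wᵀ = (m : ℤ) • (1 : Matrix (Fin n) (Fin n) ℤ))
    (hm : (m : F) + 1 ≠ 0)
    (G : Matrix (Fin n) (Fin n ⊕ Fin n) F)
    (hG : G = Matrix.fromCols (W.map (Int.cast : ℤ → F)) (1 : Matrix (Fin n) (Fin n) F)) :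
    IsLCD (rowSpan F G) ∧ Module.finrank F (rowSpan F G) = n := by
  have hGram : G * Gᵀ = ((m : F) + 1) • (1 : Matrix (Fin n) (Fin n) F) := by
    rw [hG, fromCols_mul_transpose_fromCols, map_intCast_mul_transpose_eq_smul_one hW,
      transpose_one, mul_one, add_smul, one_smul]
  have hunit : IsUnit (G * Gᵀ) := hGram ▸ isUnit_one.smul (IsUnit.mk0 _ hm).unit
  refine ⟨isLCD_rowSpan_of_isUnit_mul_transpose hunit, ?_⟩
  rw [finrank_rowSpan_of_isUnit_mul_transpose hunit, Fintype.card_fin]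

/-- Let `W` be a weighing matrix `W(n,m)` and `G = [W | I_n]` over the
finite field `F`.  If `m + 1 ≠ 0` in `F`, then `G` generates an LCD code of length `2n`
and dimension `n` over `F`. -/
theorem statement4 {F : Type*} [Field F] [Fintype F] {n m : ℕ}
    (W : Matrix (Fin n) (Fin n) ℤ)
    (hWent : ∀ i j, W i j = 0 ∨ W i j = 1 ∨ W i j = -1)
    (hW : W * Wᵀ = (m : ℤ) • (1 : Matrix (Fin n) (Fin n) ℤ))
    (hm : (m : F) + 1 ≠ 0)
    (G : Matrix (Fin n) (Fin n ⊕ Fin n) F)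
    (hG : G = Matrix.fromCols (W.map (Int.cast : ℤ → F)) (1 : Matrix (Fin n) (Fin n) F)) :
    IsLCD (rowSpan F G) ∧ Module.finrank F (rowSpan F G) = n :=
  statement4_general W hW hm G hG
end

section
/- Let M be a nonsingular n×n matrix over a field F, let N = (M⁻¹)ᵀ, and let G be a group of permutation automorphisms of M whose number t of row orbits equals its number of column orbits. Let R = [Γ_{ij}] be the t×t row orbit matrix of M with respect to G, and let C = [γ_{ij}] be the t×t column orbit matrix of N with respect to G (using the same orderings of the row orbits and of the column orbits). Then R is nonsingular and R⁻¹ = Cᵀ. -/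
/-!
Since `G` acts by automorphisms of `N = (M⁻¹)ᵀ` as well, the sum of a column of `N` over a
row orbit `R_k` depends only on the column orbit `C_j` of that column. Hence in the product
`Γ γᵀ` the sum over column orbits `j` and over the columns `z ∈ C_j` recombines into a sum
over all `z`, giving `Σ_{w ∈ R_k} (M Nᵀ)_{x w} = Σ_{w ∈ R_k} δ_{x w}` for `x ∈ R_i`, which
is `δ_{ik}` because the row orbits partition the indices.
-/

open Matrix BigOperators

/-- `(σ, τ)` is a permutation automorphism of the square matrix `M` if permuting the rows
by `σ` and the columns by `τ` leaves `M` unchanged, i.e. `M (σ i) (τ j) = M i j`. -/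
def IsPermAut {n : ℕ} {R : Type*} (M : Matrix (Fin n) (Fin n) R)
    (g : Equiv.Perm (Fin n) × Equiv.Perm (Fin n)) : Prop :=
  ∀ i j, M (g.1 i) (g.2 j) = M i j

section OrbitMatrix

variable {α ι K : Type*}

def rowOrbitMatrix [Fintype α] [AddCommMonoid K] (A : Matrix α α K) (C : ι → Finset α)
    (ρ : ι → α) : Matrix ι ι K :=
  Matrix.of fun i j => ∑ z ∈ C j, A (ρ i) z

def colOrbitMatrix [Fintype α] [AddCommMonoid K] (N : Matrix α α K) (R : ι → Finset α)
    (κ : ι → α) : Matrix ι ι K :=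
  Matrix.of fun i j => ∑ w ∈ R i, N w (κ j)

theorem Finset.sum_sum_of_existsUnique_mem [Fintype α] [Fintype ι] [AddCommMonoid K]
    {C : ι → Finset α} (hC : ∀ z, ∃! j, z ∈ C j) (f : α → K) : ∑ j, ∑ z ∈ C j, f z = ∑ z, f z := by
  classical
  have hdisj : (↑(Finset.univ : Finset ι) : Set ι).PairwiseDisjoint C := fun j₁ _ j₂ _ hne =>
    Finset.disjoint_left.2 fun z hz₁ hz₂ => hne ((hC z).unique hz₁ hz₂)
  rw [← Finset.sum_biUnion hdisj]
  refine Finset.sum_congr (Finset.eq_univ_of_forall fun z => ?_) fun _ _ => rfl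
  obtain ⟨j, hj, -⟩ := hC z
  exact Finset.mem_biUnion.2 ⟨j, Finset.mem_univ j, hj⟩

theorem sum_one_apply_of_existsUnique_mem [DecidableEq α] [DecidableEq ι] [Semiring K]
    {R : ι → Finset α} (hR : ∀ x, ∃! i, x ∈ R i) {ρ : ι → α} (hρ : ∀ i, ρ i ∈ R i) (i k : ι) :
    ∑ w ∈ R k, (1 : Matrix α α K) (ρ i) w = (1 : Matrix ι ι K) i k := by
  have hmem : ρ i ∈ R k ↔ i = k :=
    ⟨fun h => (hR (ρ i)).unique (hρ i) h, fun h => h ▸ hρ i⟩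
  simp only [one_apply, Finset.sum_ite_eq, hmem]

theorem rowOrbitMatrix_mul_colOrbitMatrix_transpose [Fintype α] [Fintype ι] [DecidableEq α]
    [DecidableEq ι] [CommSemiring K]
    {A N : Matrix α α K} (hAN : A * Nᵀ = 1) {R C : ι → Finset α}
    (hRpart : ∀ x, ∃! i, x ∈ R i) (hCpart : ∀ y, ∃! j, y ∈ C j)
    {ρ κ : ι → α} (hρ : ∀ i, ρ i ∈ R i)
    (hN : ∀ k j, ∀ z ∈ C j, ∑ w ∈ R k, N w z = ∑ w ∈ R k, N w (κ j)) :
    rowOrbitMatrix A C ρ * (colOrbitMatrix N R κ)ᵀ = 1 := by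
  ext i k
  calc ∑ j, (∑ z ∈ C j, A (ρ i) z) * ∑ w ∈ R k, N w (κ j)
      = ∑ j, ∑ z ∈ C j, A (ρ i) z * ∑ w ∈ R k, N w z := by
        refine Finset.sum_congr rfl fun j _ => ?_
        rw [Finset.sum_mul]
        exact Finset.sum_congr rfl fun z hz => by rw [hN k j z hz]
    _ = ∑ z, A (ρ i) z * ∑ w ∈ R k, N w z := Finset.sum_sum_of_existsUnique_mem hCpart _
    _ = ∑ w ∈ R k, (A * Nᵀ) (ρ i) w := by
        simp only [mul_apply, transpose_apply, Finset.mul_sum]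
        exact Finset.sum_comm
    _ = (1 : Matrix ι ι K) i k := by
        rw [hAN, sum_one_apply_of_existsUnique_mem hRpart hρ]

end OrbitMatrix

section PermAut

variable {n : ℕ} {K : Type*}

theorem IsPermAut.inv_transpose [CommRing K] {M : Matrix (Fin n) (Fin n) K}
    {g : Equiv.Perm (Fin n) × Equiv.Perm (Fin n)} (h : IsPermAut M g) :
    IsPermAut (M⁻¹)ᵀ g := by
  have hM : M.submatrix g.1 g.2 = M := by
    ext i j
    exact h i j
  intro i j
  have := congrFun₂ (inv_submatrix_equiv M g.1 g.2) j i
  rw [hM] at this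
  exact this.symm

theorem IsPermAut.sum_apply_snd [AddCommMonoid K] {N : Matrix (Fin n) (Fin n) K}
    {g : Equiv.Perm (Fin n) × Equiv.Perm (Fin n)} (h : IsPermAut N g) {S : Finset (Fin n)}
    (hS : ∀ w, g.1 w ∈ S ↔ w ∈ S) (y : Fin n) :
    ∑ w ∈ S, N w (g.2 y) = ∑ w ∈ S, N w y :=
  (Finset.sum_equiv g.1 (fun w => (hS w).symm) fun w _ => (h w y).symm).symm

theorem fst_apply_mem_iff_of_orbit {G : Subgroup (Equiv.Perm (Fin n) × Equiv.Perm (Fin n))}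
    {S : Finset (Fin n)} (hS : ∀ x ∈ S, ∀ w, w ∈ S ↔ ∃ g ∈ G, g.1 x = w)
    {g : Equiv.Perm (Fin n) × Equiv.Perm (Fin n)} (hg : g ∈ G) (w : Fin n) :
    g.1 w ∈ S ↔ w ∈ S :=
  ⟨fun h => (hS _ h w).2 ⟨g⁻¹, inv_mem hg, by simp⟩, fun h => (hS w h _).2 ⟨g, hg, rfl⟩⟩

end PermAut

/-- Let `M` be a nonsingular `n × n` matrix over a field `F`, let
`N = (M⁻¹)ᵀ`, and let `G` be a group of permutation automorphisms of `M` with `t` row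
orbits `R_1, …, R_t` and `t` column orbits `C_1, …, C_t`.  If `Rmat` is the row orbit
matrix of `M` and `Cmat` is the column orbit matrix of `N` (with the same orderings of
the orbits), then `Rmat` is nonsingular and `Rmat⁻¹ = Cmatᵀ`. -/
theorem statement13 {F : Type*} [Field F] {n t : ℕ}
    (M : Matrix (Fin n) (Fin n) F) (hM : IsUnit M.det)
    (G : Subgroup (Equiv.Perm (Fin n) × Equiv.Perm (Fin n)))
    (hG : ∀ g ∈ G, IsPermAut M g)
    (R : Fin t → Finset (Fin n))
    (hRorb : ∀ i, ∀ x ∈ R i, ∀ w, w ∈ R i ↔ ∃ g ∈ G, g.1 x = w)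
    (hRpart : ∀ x : Fin n, ∃! i, x ∈ R i)
    (C : Fin t → Finset (Fin n))
    (hCorb : ∀ j, ∀ y ∈ C j, ∀ z, z ∈ C j ↔ ∃ g ∈ G, g.2 y = z)
    (hCpart : ∀ y : Fin n, ∃! j, y ∈ C j)
    (ρ : Fin t → Fin n) (hρ : ∀ i, ρ i ∈ R i)
    (κ : Fin t → Fin n) (hκ : ∀ j, κ j ∈ C j)
    (Rmat Cmat : Matrix (Fin t) (Fin t) F)
    (hRmat : Rmat = Matrix.of fun i j => ∑ z ∈ C j, M (ρ i) z)
    (hCmat : Cmat = Matrix.of fun i j => ∑ w ∈ R i, (M⁻¹)ᵀ w (κ j)) :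
    IsUnit Rmat.det ∧ Rmat⁻¹ = Cmatᵀ := by
  have hconst : ∀ k j, ∀ z ∈ C j,
      ∑ w ∈ R k, (M⁻¹)ᵀ w z = ∑ w ∈ R k, (M⁻¹)ᵀ w (κ j) := by
    intro k j z hz
    obtain ⟨g, hg, rfl⟩ := (hCorb j (κ j) (hκ j) z).1 hz
    exact (hG g hg).inv_transpose.sum_apply_snd (fst_apply_mem_iff_of_orbit (hRorb k) hg) _
  have hMN : M * ((M⁻¹)ᵀ)ᵀ = 1 := by
    rw [transpose_transpose, mul_nonsing_inv M hM]
  have key : Rmat * Cmatᵀ = 1 := by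
    subst hRmat hCmat
    exact rowOrbitMatrix_mul_colOrbitMatrix_transpose hMN hRpart hCpart hρ hconst
  exact ⟨isUnit_det_of_right_inverse key, inv_eq_right_inv key⟩
end

section
/- Let W be an F_4-weighing matrix W(n,m;F_4) and let G be a group of permutation automorphisms of W acting with t row orbits and t column orbits, all of the same length. Let R be the t×t row orbit matrix of W with respect to G (entries computed in F_4), and let B be a t×b point-by-block incidence matrix of an (r,λ)-design on t points, with entries interpreted in F_4. If (r + (t−1)λ + m) ≠ 0 and (r − λ + m) ≠ 0 in F_4, then A = [R|B] generates a Hermitian LCD code C of length t+b over F_4, i.e., C ∩ C^H = {0}. -/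
/-!
Over `F₄` conjugation `x ↦ x²` is a ring endomorphism, so the Hermitian Gram matrix of
`A = [R | B]` is `R R* + B Bᵀ`. In the block of `W` cut out by a row orbit and a column orbit,
every row is a rearrangement of the representative row and every column a rearrangement of a
fixed column; since both orbits have the same length, double counting shows that the
representative row and each column carry the same multiset of entries. This turns every entry
of `R R*` into a sum of entries of `W W* = m I` over a row orbit, whence `R R* = m I` and
`A A* = (r - λ + m) I + λ J`. The two hypotheses make this matrix nonsingular, and a codeword
`v = x A` of `C ∩ C^H` satisfies `(A A*) x̄ = 0`, so `x = 0`.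
-/

open Matrix BigOperators

open Finset

section Rearrangement

variable {α β γ : Type*}

theorem Finset.val_map_perm {s : Finset β} (σ : Equiv.Perm β) (hσ : ∀ z ∈ s, σ z ∈ s) :
    s.val.map σ = s.val := by
  have hmap : s.map σ.toEmbedding = s :=
    map_eq_of_subset fun z hz => by
      obtain ⟨w, hw, rfl⟩ := mem_map.1 hz
      exact hσ w hw
  simpa only [map_val, Equiv.coe_toEmbedding] using congrArg Finset.val hmap

theorem Finset.val_map_row_eq_val_map_col [DecidableEq γ] {s : Finset α} {u : Finset β}
    (f : α → β → γ) (hcard : #s = #u) {y₀ : α} (hy₀ : y₀ ∈ s) (z₀ : β)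
    (hrow : ∀ y ∈ s, u.val.map (f y) = u.val.map (f y₀))
    (hcol : ∀ z ∈ u, s.val.map (f · z) = s.val.map (f · z₀)) :
    u.val.map (f y₀) = s.val.map (f · z₀) := by
  ext a
  have hcount := sum_card_bipartiteAbove_eq_sum_card_bipartiteBelow
    (s := s) (t := u) (r := fun y z => a = f y z)
  have hrow' : ∀ y ∈ s, #(u.bipartiteAbove (fun y z => a = f y z) y) =
      (u.val.map (f y₀)).count a := fun y hy => by
    rw [← hrow y hy, Multiset.count_map]; rfl
  have hcol' : ∀ z ∈ u, #(s.bipartiteBelow (fun y z => a = f y z) z) =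
      (s.val.map (f · z₀)).count a := fun z hz => by
    rw [← hcol z hz, Multiset.count_map]; rfl
  rw [sum_congr rfl hrow', sum_congr rfl hcol', sum_const, sum_const, hcard, smul_eq_mul,
    smul_eq_mul] at hcount
  exact Nat.eq_of_mul_eq_mul_left (hcard ▸ card_pos.2 ⟨y₀, hy₀⟩) hcount

end Rearrangement

theorem Finset.sum_sum_eq_sum_of_existsUnique_mem {ι α M : Type*} [Fintype ι] [Fintype α]
    [DecidableEq α] [AddCommMonoid M] {C : ι → Finset α} (hC : ∀ z, ∃! j, z ∈ C j)
    (f : α → M) : ∑ j, ∑ z ∈ C j, f z = ∑ z, f z := by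
  rw [← sum_biUnion fun i _ j _ hij => disjoint_left.2 fun z hi hj => hij ((hC z).unique hi hj)]
  congr
  exact eq_univ_of_forall fun z => mem_biUnion.2 <| by
    obtain ⟨j, hj, -⟩ := hC z
    exact ⟨j, mem_univ j, hj⟩

def orbitMatrix {F : Type*} [AddCommMonoid F] {n t : ℕ} (W : Matrix (Fin n) (Fin n) F)
    (C : Fin t → Finset (Fin n)) (ρ : Fin t → Fin n) : Matrix (Fin t) (Fin t) F :=
  of fun i j => ∑ z ∈ C j, W (ρ i) z

section OrbitMatrix

variable {F : Type*} {n t l : ℕ} {W : Matrix (Fin n) (Fin n) F}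
  {G : Subgroup (Equiv.Perm (Fin n) × Equiv.Perm (Fin n))} {R C : Fin t → Finset (Fin n)}
  {ρ : Fin t → Fin n}

theorem val_map_row_eq_of_isPermAut (hG : ∀ g ∈ G, IsPermAut W g)
    (hCorb : ∀ j, ∀ y ∈ C j, ∀ z, z ∈ C j ↔ ∃ g ∈ G, g.2 y = z) {g} (hg : g ∈ G) (x : Fin n)
    (j : Fin t) : (C j).val.map (W (g.1 x)) = (C j).val.map (W x) := by
  conv_lhs => rw [← (C j).val_map_perm g.2 fun z hz => (hCorb j z hz _).2 ⟨g, hg, rfl⟩]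
  rw [Multiset.map_map]
  exact Multiset.map_congr rfl fun z _ => hG g hg x z

theorem val_map_col_eq_of_isPermAut (hG : ∀ g ∈ G, IsPermAut W g)
    (hRorb : ∀ i, ∀ x ∈ R i, ∀ w, w ∈ R i ↔ ∃ g ∈ G, g.1 x = w) {g} (hg : g ∈ G) (z : Fin n)
    (i : Fin t) : (R i).val.map (W · (g.2 z)) = (R i).val.map (W · z) := by
  conv_lhs => rw [← (R i).val_map_perm g.1 fun x hx => (hRorb i x hx _).2 ⟨g, hg, rfl⟩]
  rw [Multiset.map_map]
  exact Multiset.map_congr rfl fun x _ => hG g hg x z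

theorem val_map_orbitRow_eq_val_map_orbitCol (hG : ∀ g ∈ G, IsPermAut W g)
    (hRorb : ∀ i, ∀ x ∈ R i, ∀ w, w ∈ R i ↔ ∃ g ∈ G, g.1 x = w)
    (hCorb : ∀ j, ∀ y ∈ C j, ∀ z, z ∈ C j ↔ ∃ g ∈ G, g.2 y = z)
    (hRlen : ∀ i, #(R i) = l) (hClen : ∀ j, #(C j) = l) {i j : Fin t} {x z : Fin n}
    (hx : x ∈ R i) (hz : z ∈ C j) : (C j).val.map (W x) = (R i).val.map (W · z) := by
  classical
  refine Finset.val_map_row_eq_val_map_col W ((hRlen i).trans (hClen j).symm) hx z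
    (fun y hy => ?_) (fun z' hz' => ?_)
  · obtain ⟨g, hg, rfl⟩ := (hRorb i x hx y).1 hy
    exact val_map_row_eq_of_isPermAut hG hCorb hg x j
  · obtain ⟨g, hg, rfl⟩ := (hCorb j z hz z').1 hz'
    exact val_map_col_eq_of_isPermAut hG hRorb hg z i

variable [Semiring F] (σ : F →+* F)

theorem orbitMatrix_mul_map_transpose_apply (hG : ∀ g ∈ G, IsPermAut W g)
    (hRorb : ∀ i, ∀ x ∈ R i, ∀ w, w ∈ R i ↔ ∃ g ∈ G, g.1 x = w)
    (hCorb : ∀ j, ∀ y ∈ C j, ∀ z, z ∈ C j ↔ ∃ g ∈ G, g.2 y = z)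
    (hCpart : ∀ y : Fin n, ∃! j, y ∈ C j)
    (hRlen : ∀ i, #(R i) = l) (hClen : ∀ j, #(C j) = l) (hρ : ∀ i, ρ i ∈ R i) (i j : Fin t) :
    (orbitMatrix W C ρ * ((orbitMatrix W C ρ).map σ)ᵀ) i j =
      ∑ y ∈ R j, (W * (W.map σ)ᵀ) (ρ i) y := by
  calc (orbitMatrix W C ρ * ((orbitMatrix W C ρ).map σ)ᵀ) i j
      = ∑ j', ∑ z ∈ C j', W (ρ i) z * ∑ z' ∈ C j', σ (W (ρ j) z') := by
        simp [orbitMatrix, mul_apply, sum_mul]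
    _ = ∑ j', ∑ z ∈ C j', ∑ y ∈ R j, W (ρ i) z * σ (W y z) := by
        refine sum_congr rfl fun j' _ => sum_congr rfl fun z hz => ?_
        have hblock := congrArg (fun s => (s.map σ).sum)
          (val_map_orbitRow_eq_val_map_orbitCol hG hRorb hCorb hRlen hClen (hρ j) hz)
        simp only [Multiset.map_map, Function.comp_def, sum_map_val] at hblock
        rw [hblock, mul_sum]
    _ = ∑ z, ∑ y ∈ R j, W (ρ i) z * σ (W y z) := sum_sum_eq_sum_of_existsUnique_mem hCpart _
    _ = ∑ y ∈ R j, (W * (W.map σ)ᵀ) (ρ i) y := by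
        rw [sum_comm]
        simp [mul_apply]

theorem orbitMatrix_mul_map_transpose {c : F} (hW : W * (W.map σ)ᵀ = c • 1)
    (hG : ∀ g ∈ G, IsPermAut W g)
    (hRorb : ∀ i, ∀ x ∈ R i, ∀ w, w ∈ R i ↔ ∃ g ∈ G, g.1 x = w)
    (hRpart : ∀ x : Fin n, ∃! i, x ∈ R i)
    (hCorb : ∀ j, ∀ y ∈ C j, ∀ z, z ∈ C j ↔ ∃ g ∈ G, g.2 y = z)
    (hCpart : ∀ y : Fin n, ∃! j, y ∈ C j)
    (hRlen : ∀ i, #(R i) = l) (hClen : ∀ j, #(C j) = l) (hρ : ∀ i, ρ i ∈ R i) :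
    orbitMatrix W C ρ * ((orbitMatrix W C ρ).map σ)ᵀ = c • 1 := by
  ext i j
  rw [orbitMatrix_mul_map_transpose_apply σ hG hRorb hCorb hCpart hRlen hClen hρ, hW]
  have hmem : ρ i ∈ R j ↔ i = j :=
    ⟨fun h => (hRpart (ρ i)).unique (hρ i) h, fun h => h ▸ hρ i⟩
  simp [one_apply, hmem]

end OrbitMatrix

section Gram

variable {F ι κ κ' : Type*} [Fintype κ] [Fintype κ']

theorem fromCols_mul_map_transpose_fromCols [Semiring F] (σ : F →+* F) (M : Matrix ι κ F)
    (N : Matrix ι κ' F) :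
    fromCols M N * ((fromCols M N).map σ)ᵀ = M * (M.map σ)ᵀ + N * (N.map σ)ᵀ := by
  rw [fromCols_map, transpose_fromCols, fromCols_mul_fromRows]

theorem map_intCast_mul_map_transpose [Ring F] (σ : F →+* F) (B : Matrix ι κ ℤ) :
    B.map (Int.cast : ℤ → F) * ((B.map (Int.cast : ℤ → F)).map σ)ᵀ =
      (B * Bᵀ).map (Int.cast : ℤ → F) := by
  rw [Matrix.map_map, show σ ∘ Int.cast = Int.cast from funext (map_intCast σ), ← transpose_map]
  exact (Matrix.map_mul (f := Int.castRingHom F)).symm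

theorem eq_zero_of_smul_one_add_of_const_mulVec_eq_zero [Field F] [Fintype ι] [DecidableEq ι]
    {a c : F} (ha : a ≠ 0) (hac : a + Fintype.card ι * c ≠ 0) {y : ι → F}
    (hy : (a • (1 : Matrix ι ι F) + of fun _ _ => c) *ᵥ y = 0) : y = 0 := by
  have hrow : ∀ i, a * y i + c * ∑ j, y j = 0 := fun i => by
    simpa [mulVec, dotProduct, add_mul, sum_add_distrib, one_apply, mul_sum] using congrFun hy i
  have hsum : ∑ j, y j = 0 := by
    have htotal := sum_congr rfl fun i (_ : i ∈ univ) => hrow i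
    simp only [sum_add_distrib, ← mul_sum, sum_const, card_univ, nsmul_eq_mul] at htotal
    have hfactor : (a + Fintype.card ι * c) * ∑ j, y j = 0 := by linear_combination htotal
    exact (mul_eq_zero.1 hfactor).resolve_left hac
  funext i
  simpa [hsum, ha] using hrow i

theorem rowSpan_inter_sesqDual_eq_zero [Field F] [Fintype ι] (σ : F →+* F) (A : Matrix ι κ F)
    (hA : ∀ y, (A * (A.map σ)ᵀ) *ᵥ y = 0 → y = 0) :
    (rowSpan F A : Set (κ → F)) ∩ {v | ∀ u ∈ rowSpan F A, ∑ k, u k * σ (v k) = 0} = {0} := by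
  refine Set.eq_singleton_iff_unique_mem.2 ⟨⟨zero_mem _, by simp⟩, ?_⟩
  rintro v ⟨hv, hdual⟩
  obtain ⟨x, rfl⟩ := (Submodule.mem_span_range_iff_exists_fun F).1 hv
  have hσx : σ ∘ x = 0 := hA _ <| funext fun i => by
    have := hdual (A i) (Submodule.subset_span ⟨i, rfl⟩)
    simp only [mulVec, dotProduct, mul_apply, map_apply, transpose_apply, Pi.zero_apply,
      Function.comp_apply]
    rw [← this]
    simp only [Finset.sum_apply, Pi.smul_apply, smul_eq_mul, map_sum, map_mul, mul_sum, sum_mul]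
    rw [sum_comm]
    exact sum_congr rfl fun k _ => sum_congr rfl fun j _ => by ring
  have hx : x = 0 := funext fun i => σ.injective (by simpa using congrFun hσx i)
  simp [hx]

end Gram

theorem statement15_general {F : Type*} [Field F] [Fintype F]
    (hF : Fintype.card F = 4)
    {n m t b r lam l : ℕ}
    (W : Matrix (Fin n) (Fin n) F)
    (hW : W * (Matrix.of fun i j => (W j i) ^ 2) = (m : F) • (1 : Matrix (Fin n) (Fin n) F))
    (G : Subgroup (Equiv.Perm (Fin n) × Equiv.Perm (Fin n)))
    (hG : ∀ g ∈ G, IsPermAut W g)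
    (R : Fin t → Finset (Fin n))
    (hRorb : ∀ i, ∀ x ∈ R i, ∀ w, w ∈ R i ↔ ∃ g ∈ G, g.1 x = w)
    (hRpart : ∀ x : Fin n, ∃! i, x ∈ R i)
    (C : Fin t → Finset (Fin n))
    (hCorb : ∀ j, ∀ y ∈ C j, ∀ z, z ∈ C j ↔ ∃ g ∈ G, g.2 y = z)
    (hCpart : ∀ y : Fin n, ∃! j, y ∈ C j)
    (hRlen : ∀ i, (R i).card = l) (hClen : ∀ j, (C j).card = l)
    (ρ : Fin t → Fin n) (hρ : ∀ i, ρ i ∈ R i)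
    (B : Matrix (Fin t) (Fin b) ℤ)
    (hB : B * Bᵀ = ((r : ℤ) - (lam : ℤ)) • (1 : Matrix (Fin t) (Fin t) ℤ)
          + Matrix.of (fun _ _ => (lam : ℤ)))
    (h1 : (r : F) + ((t : F) - 1) * (lam : F) + (m : F) ≠ 0)
    (h2 : (r : F) - (lam : F) + (m : F) ≠ 0)
    (A : Matrix (Fin t) (Fin t ⊕ Fin b) F)
    (hA : A = Matrix.fromCols (Matrix.of fun i j => ∑ z ∈ C j, W (ρ i) z)
      (B.map (Int.cast : ℤ → F))) :
    (rowSpan F A : Set ((Fin t ⊕ Fin b) → F)) ∩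
      {v | ∀ u ∈ rowSpan F A, ∑ k, u k * (v k) ^ 2 = 0} = {0} := by
  have : CharP F 2 := charP_of_card_eq_prime_pow (p := 2) (f := 2) hF
  -- `frobenius F 2 x` unfolds to `x ^ 2`, so `hW` and the goal already speak about `frobenius F 2`.
  have hgram : A * (A.map (frobenius F 2))ᵀ =
      ((r : F) - lam + m) • (1 : Matrix (Fin t) (Fin t) F) + of fun _ _ => (lam : F) := by
    rw [hA, fromCols_mul_map_transpose_fromCols, map_intCast_mul_map_transpose, hB,
      show (of fun i j => ∑ z ∈ C j, W (ρ i) z) = orbitMatrix W C ρ from rfl,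
      orbitMatrix_mul_map_transpose (frobenius F 2) hW hG hRorb hRpart hCorb hCpart hRlen hClen hρ]
    ext i j
    simp only [Matrix.add_apply, Matrix.smul_apply, map_apply, of_apply, one_apply, smul_eq_mul]
    split_ifs <;> push_cast <;> ring
  refine rowSpan_inter_sesqDual_eq_zero (frobenius F 2) A fun y hy => ?_
  refine eq_zero_of_smul_one_add_of_const_mulVec_eq_zero h2 ?_ (hgram ▸ hy)
  rw [Fintype.card_fin]
  convert h1 using 1
  ring

/-- Let `W` be an `F₄`-weighing matrix `W(n,m;F₄)` (each row and column
has exactly `m` nonzero entries and `W·W* = m·I` where `*` is conjugate transposition,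
conjugation being the Frobenius `x ↦ x²`), and let `G` be a group of permutation
automorphisms of `W` acting with `t` row orbits and `t` column orbits, all of the same
length.  Let `R` be the `t × t` row orbit matrix of `W` and `B` the `t × b` incidence
matrix of an `(r,λ)`-design on `t` points.  If `r + (t-1)λ + m ≠ 0` and `r - λ + m ≠ 0`
in `F₄`, then `A = [R | B]` generates a Hermitian LCD code `C` of length `t + b`, i.e.
`C ∩ C^H = {0}` where `C^H = {v | Σ_k u_k·v_k² = 0 for all u ∈ C}`. -/
theorem statement15 {F : Type*} [Field F] [Fintype F] [DecidableEq F]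
    (hF : Fintype.card F = 4)
    {n m t b r lam l : ℕ} (hr : 0 < r) (hlam : 0 < lam)
    (W : Matrix (Fin n) (Fin n) F)
    (hWrow : ∀ i, (Finset.univ.filter fun j => W i j ≠ 0).card = m)
    (hWcol : ∀ j, (Finset.univ.filter fun i => W i j ≠ 0).card = m)
    (hW : W * (Matrix.of fun i j => (W j i) ^ 2) = (m : F) • (1 : Matrix (Fin n) (Fin n) F))
    (G : Subgroup (Equiv.Perm (Fin n) × Equiv.Perm (Fin n)))
    (hG : ∀ g ∈ G, IsPermAut W g)
    (R : Fin t → Finset (Fin n))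
    (hRorb : ∀ i, ∀ x ∈ R i, ∀ w, w ∈ R i ↔ ∃ g ∈ G, g.1 x = w)
    (hRpart : ∀ x : Fin n, ∃! i, x ∈ R i)
    (C : Fin t → Finset (Fin n))
    (hCorb : ∀ j, ∀ y ∈ C j, ∀ z, z ∈ C j ↔ ∃ g ∈ G, g.2 y = z)
    (hCpart : ∀ y : Fin n, ∃! j, y ∈ C j)
    (hRlen : ∀ i, (R i).card = l) (hClen : ∀ j, (C j).card = l)
    (ρ : Fin t → Fin n) (hρ : ∀ i, ρ i ∈ R i)
    (B : Matrix (Fin t) (Fin b) ℤ)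
    (hBent : ∀ i j, B i j = 0 ∨ B i j = 1)
    (hB : B * Bᵀ = ((r : ℤ) - (lam : ℤ)) • (1 : Matrix (Fin t) (Fin t) ℤ)
          + Matrix.of (fun _ _ => (lam : ℤ)))
    (h1 : (r : F) + ((t : F) - 1) * (lam : F) + (m : F) ≠ 0)
    (h2 : (r : F) - (lam : F) + (m : F) ≠ 0)
    (A : Matrix (Fin t) (Fin t ⊕ Fin b) F)
    (hA : A = Matrix.fromCols (Matrix.of fun i j => ∑ z ∈ C j, W (ρ i) z)
      (B.map (Int.cast : ℤ → F))) :
    (rowSpan F A : Set ((Fin t ⊕ Fin b) → F)) ∩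
      {v | ∀ u ∈ rowSpan F A, ∑ k, u k * (v k) ^ 2 = 0} = {0} :=
  statement15_general hF W hW G hG R hRorb hRpart C hCorb hCpart hRlen hClen ρ hρ B hB h1 h2 A hA
end
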